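/- Let S be a semigroup admitting an invariant mean m (both left and right invariant), let Z be a real Banach space and X = Z* its dual. Then there exists a bounded linear invariant mean M : B(S,X) → X such that for every f ∈ B(S,X), M(f) lies in the weak*-closed convex hull of the range f(S). -/

import Mathlib

/-!
Scalarize: for `z : Z` put `M f z := m (t ↦ f t z)`; normalization and both invariances pass
through from `m`. If `M f` were outside the weak*-closed convex hull of the range of `f`, Hahn–Banach
in the locally convex weak* topology would separate it by a weak*-continuous functional, which is
evaluation at some `z : Z`; then `m (t ↦ f t z)` would lie strictly below a bound that every
`f t z` exceeds, contradicting positivity of `m`.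
-/

noncomputable section
open BoundedContinuousFunction

/-- For a bounded function `f` on a (discrete) semigroup `S`, the translate `t ↦ f (t * s)`. -/
def rightTranslate {S : Type*} [Semigroup S] [TopologicalSpace S] [DiscreteTopology S]
    {E : Type*} [PseudoMetricSpace E]
    (f : S →ᵇ E) (s : S) : S →ᵇ E :=
  f.compContinuous ⟨fun t => t * s, continuous_of_discreteTopology⟩

/-- For a bounded function `f` on a (discrete) semigroup `S`, the translate `t ↦ f (s * t)`. -/
def leftTranslate {S : Type*} [Semigroup S] [TopologicalSpace S] [DiscreteTopology S]
    {E : Type*} [PseudoMetricSpace E]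
    (f : S →ᵇ E) (s : S) : S →ᵇ E :=
  f.compContinuous ⟨fun t => s * t, continuous_of_discreteTopology⟩

/-- A left-invariant mean on a semigroup `S`: a positive, norm-one continuous linear
functional `m` on the space of bounded real functions on `S` with `m 𝟙 = 1` and
`m (t ↦ f (t * s)) = m f` for all `f` and `s`. -/
def IsLeftInvariantMean {S : Type*} [Semigroup S] [TopologicalSpace S] [DiscreteTopology S]
    (m : (S →ᵇ ℝ) →L[ℝ] ℝ) : Prop :=
  (∀ f : S →ᵇ ℝ, (∀ t, 0 ≤ f t) → 0 ≤ m f) ∧ ‖m‖ = 1 ∧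
  m (const S (1 : ℝ)) = 1 ∧
  ∀ (f : S →ᵇ ℝ) (s : S), m (rightTranslate f s) = m f

/-- An invariant mean on a semigroup `S`: a positive, norm-one continuous linear functional
`m` on the bounded real functions on `S` with `m 𝟙 = 1` which is both left invariant
(`m (t ↦ f (t * s)) = m f`) and right invariant (`m (t ↦ f (s * t)) = m f`). -/
def IsInvariantMean {S : Type*} [Semigroup S] [TopologicalSpace S] [DiscreteTopology S]
    (m : (S →ᵇ ℝ) →L[ℝ] ℝ) : Prop :=
  (∀ f : S →ᵇ ℝ, (∀ t, 0 ≤ f t) → 0 ≤ m f) ∧ ‖m‖ = 1 ∧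
  m (const S (1 : ℝ)) = 1 ∧
  (∀ (f : S →ᵇ ℝ) (s : S), m (rightTranslate f s) = m f) ∧
  (∀ (f : S →ᵇ ℝ) (s : S), m (leftTranslate f s) = m f)

open NormedSpace

instance WeakDual.instLocallyConvexSpace {E : Type*} [AddCommGroup E] [TopologicalSpace E]
    [Module ℝ E] : LocallyConvexSpace ℝ (WeakDual ℝ E) :=
  WeakBilin.locallyConvexSpace

section MeanBounds

variable {α : Type*} [TopologicalSpace α] {m : (α →ᵇ ℝ) →L[ℝ] ℝ}

lemma map_const_of_map_one (hone : m (const α 1) = 1) (c : ℝ) : m (const α c) = c := by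
  have hc : const α c = c • const α (1 : ℝ) := by ext; simp
  rw [hc, map_smul, hone, smul_eq_mul, mul_one]

lemma le_apply_of_forall_le (hpos : ∀ f : α →ᵇ ℝ, (∀ t, 0 ≤ f t) → 0 ≤ m f)
    (hone : m (const α 1) = 1) {g : α →ᵇ ℝ} {c : ℝ} (hg : ∀ t, c ≤ g t) : c ≤ m g := by
  have h := hpos (g - const α c) fun t => by simpa using hg t
  rwa [map_sub, map_const_of_map_one hone, sub_nonneg] at h

end MeanBounds

section DualMean

variable {α : Type*} [TopologicalSpace α] {Z : Type*} [NormedAddCommGroup Z] [NormedSpace ℝ Z]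
  {m : (α →ᵇ ℝ) →L[ℝ] ℝ}

def scalarize (z : Z) : (α →ᵇ StrongDual ℝ Z) →L[ℝ] (α →ᵇ ℝ) :=
  (ContinuousLinearMap.apply ℝ ℝ z).compLeftContinuousBounded α

@[simp]
lemma scalarize_apply (z : Z) (f : α →ᵇ StrongDual ℝ Z) (t : α) : scalarize z f t = f t z := rfl

lemma scalarize_add (z w : Z) (f : α →ᵇ StrongDual ℝ Z) :
    scalarize (z + w) f = scalarize z f + scalarize w f := by
  ext; simp

lemma scalarize_smul (c : ℝ) (z : Z) (f : α →ᵇ StrongDual ℝ Z) :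
    scalarize (c • z) f = c • scalarize z f := by
  ext; simp

lemma norm_scalarize_le (z : Z) (f : α →ᵇ StrongDual ℝ Z) :
    ‖scalarize z f‖ ≤ ‖f‖ * ‖z‖ :=
  (norm_le (by positivity)).mpr fun t =>
    ((f t).le_opNorm z).trans (mul_le_mul_of_nonneg_right (f.norm_coe_le_norm t) (norm_nonneg z))

variable (m) in
def dualMean : (α →ᵇ StrongDual ℝ Z) →L[ℝ] StrongDual ℝ Z :=
  LinearMap.mkContinuous₂
    (LinearMap.mk₂ ℝ (fun f z => m (scalarize z f))
      (fun f g z => by rw [map_add, map_add])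
      (fun c f z => by rw [map_smul, map_smul])
      (fun f z w => by rw [scalarize_add, map_add])
      (fun c f z => by rw [scalarize_smul, map_smul]))
    ‖m‖ fun f z => by
      simpa [mul_assoc] using m.le_opNorm_of_le (norm_scalarize_le z f)

lemma dualMean_const (hone : m (const α 1) = 1) (x : StrongDual ℝ Z) :
    dualMean m (const α x) = x := by
  ext z
  exact map_const_of_map_one hone (x z)

lemma toWeakDual_dualMean_mem_closure_convexHull
    (hpos : ∀ g : α →ᵇ ℝ, (∀ t, 0 ≤ g t) → 0 ≤ m g) (hone : m (const α 1) = 1)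
    (f : α →ᵇ StrongDual ℝ Z) :
    StrongDual.toWeakDual (dualMean m f) ∈
      closure (convexHull ℝ (StrongDual.toWeakDual '' Set.range f)) := by
  by_contra hnot
  obtain ⟨φ, u, hφ_mean, hφ_hull⟩ := geometric_hahn_banach_point_closed
    (convex_convexHull ℝ _).closure isClosed_closure hnot
  obtain ⟨z, rfl⟩ := LinearMap.dualEmbedding_surjective (topDualPairing ℝ Z) φ
  have hlower : ∀ t, u ≤ scalarize z f t := fun t =>
    (hφ_hull _ (subset_closure (subset_convexHull ℝ _ ⟨f t, ⟨t, rfl⟩, rfl⟩))).le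
  exact (le_apply_of_forall_le hpos hone hlower).not_gt hφ_mean

end DualMean

section Semigroup

variable {S : Type*} [Semigroup S] [TopologicalSpace S] [DiscreteTopology S]
  {Z : Type*} [NormedAddCommGroup Z] [NormedSpace ℝ Z] {m : (S →ᵇ ℝ) →L[ℝ] ℝ}

lemma dualMean_leftTranslate (hleft : ∀ (g : S →ᵇ ℝ) (s : S), m (leftTranslate g s) = m g)
    (f : S →ᵇ StrongDual ℝ Z) (s : S) : dualMean m (leftTranslate f s) = dualMean m f := by
  ext z
  exact hleft (scalarize z f) s

lemma dualMean_rightTranslate (hright : ∀ (g : S →ᵇ ℝ) (s : S), m (rightTranslate g s) = m g)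
    (f : S →ᵇ StrongDual ℝ Z) (s : S) : dualMean m (rightTranslate f s) = dualMean m f := by
  ext z
  exact hright (scalarize z f) s

end Semigroup

theorem exists_dual_valued_invariant_mean_in_weakstar_hull
    {S : Type*} [Semigroup S] [TopologicalSpace S] [DiscreteTopology S]
    {Z : Type*} [NormedAddCommGroup Z] [NormedSpace ℝ Z]
    (m : (S →ᵇ ℝ) →L[ℝ] ℝ) (hm : IsInvariantMean m) :
    ∃ M : (S →ᵇ StrongDual ℝ Z) →L[ℝ] StrongDual ℝ Z,
      (∀ x : StrongDual ℝ Z, M (const S x) = x) ∧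
      (∀ (f : S →ᵇ StrongDual ℝ Z) (s : S), M (leftTranslate f s) = M f) ∧
      (∀ (f : S →ᵇ StrongDual ℝ Z) (s : S), M (rightTranslate f s) = M f) ∧
      ∀ f : S →ᵇ StrongDual ℝ Z,
        StrongDual.toWeakDual (M f) ∈
          closure (convexHull ℝ (StrongDual.toWeakDual '' Set.range ⇑f)) := by
  obtain ⟨hpos, -, hone, hright, hleft⟩ := hm
  exact ⟨dualMean m, dualMean_const hone, dualMean_leftTranslate hleft,
    dualMean_rightTranslate hright, toWeakDual_dualMean_mem_closure_convexHull hpos hone⟩
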